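/- (Lemma 2.4, osp(2m+1|2)) For every λ ∈ 𝒫 with λ₀ ≥ m, the following identity holds in K: chM(λ) − chM(λ^δ) = (∏_{α∈Δ₁⁺}(e^{α/2} + e^{−α/2}) / ∏_{α∈Δ₀⁺}(e^{α/2} − e^{−α/2})) · Σ_{w∈W} det(w) e^{w(λ+ρ)}, where λ^δ = (2m−1−λ₀)δ + Σ_{i=1}^m λ_i ε_i. -/

import Mathlib

open Finset
open Fin.NatCast

/-- The standard basis vector `ε_i` of `ℚ^{1+m}` (with `ε_0 = δ`). -/
noncomputable def eps (m i : ℕ) : Fin (m+1) → ℚ := Pi.single (i : Fin (m+1)) 1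

/-- The bilinear form `⟨λ, μ⟩ = −λ₀μ₀ + Σ_{i=1}^m λ_i μ_i` on `ℚ^{1+m}`. -/
noncomputable def form (m : ℕ) (l μ : Fin (m+1) → ℚ) : ℚ :=
  -(l 0 * μ 0) + ∑ i : Fin (m+1), (if i = 0 then 0 else l i * μ i)

/-- `ρ` for `osp(2m|2)`: `ρ₀ = 1−m`, `ρ_i = m−i`. -/
noncomputable def rhoD (m : ℕ) : Fin (m+1) → ℚ :=
  fun i => if i = 0 then 1 - (m : ℚ) else (m : ℚ) - (i : ℕ)

/-- `ρ` for `osp(2m+1|2)`: `ρ₀ = 1/2−m`, `ρ_i = m−i+1/2`. -/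
noncomputable def rhoB (m : ℕ) : Fin (m+1) → ℚ :=
  fun i => if i = 0 then 1/2 - (m : ℚ) else (m : ℚ) - (i : ℕ) + 1/2

/-- All coordinates are integers. -/
def IsIntegralWt (m : ℕ) (l : Fin (m+1) → ℚ) : Prop := ∀ i, ∃ z : ℤ, l i = z

/-- Dominant integral weights for `osp(2m|2)`. -/
def PD (m : ℕ) (l : Fin (m+1) → ℚ) : Prop :=
  IsIntegralWt m l ∧ 0 ≤ l 0 ∧
  (∀ i j : ℕ, 1 ≤ i → i ≤ j → j ≤ m - 1 → l (j : Fin (m+1)) ≤ l (i : Fin (m+1))) ∧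
  |l (m : Fin (m+1))| ≤ l ((m - 1 : ℕ) : Fin (m+1)) ∧
  (∀ i : ℕ, 1 ≤ i → i ≤ m - 1 → 0 ≤ l (i : Fin (m+1))) ∧
  (∀ i : ℕ, 1 ≤ i → i ≤ m → l 0 < (i : ℚ) → l (i : Fin (m+1)) = 0)

/-- Dominant integral weights for `osp(2m+1|2)`. -/
def PB (m : ℕ) (l : Fin (m+1) → ℚ) : Prop :=
  IsIntegralWt m l ∧ 0 ≤ l 0 ∧
  (∀ i j : ℕ, 1 ≤ i → i ≤ j → j ≤ m → l (j : Fin (m+1)) ≤ l (i : Fin (m+1))) ∧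
  (∀ i : ℕ, 1 ≤ i → i ≤ m → 0 ≤ l (i : Fin (m+1))) ∧
  (∀ i : ℕ, 1 ≤ i → i ≤ m → l 0 < (i : ℚ) → l (i : Fin (m+1)) = 0)

/-- `λ` is atypical (w.r.t. a given `ρ`): `⟨λ+ρ, δ+s·ε_i⟩ = 0` for some `1 ≤ i ≤ m`, `s = ±1`. -/
def Atyp (m : ℕ) (ρ l : Fin (m+1) → ℚ) : Prop :=
  ∃ i : ℕ, 1 ≤ i ∧ i ≤ m ∧ ∃ s : ℚ, (s = 1 ∨ s = -1) ∧
    form m (l + ρ) (eps m 0 + s • eps m i) = 0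

abbrev GLQ (m : ℕ) := (Fin (m+1) → ℚ) ≃ₗ[ℚ] (Fin (m+1) → ℚ)

/-- Permutations of the coordinates `1, …, m` (fixing coordinate `0`). -/
def permSet (m : ℕ) : Set (GLQ m) :=
  {w | ∃ σ : Equiv.Perm (Fin (m+1)), σ 0 = 0 ∧ ∀ v, w v = v ∘ σ}

/-- The sign change of coordinate `0`. -/
def flip0Set (m : ℕ) : Set (GLQ m) :=
  {w | ∀ v k, w v k = if k = 0 then -(v k) else v k}

/-- Simultaneous sign changes of two coordinates among `1, …, m`. -/
def doubleFlipSet (m : ℕ) : Set (GLQ m) :=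
  {w | ∃ i j : Fin (m+1), i ≠ 0 ∧ j ≠ 0 ∧ i ≠ j ∧
    ∀ v k, w v k = if k = i ∨ k = j then -(v k) else v k}

/-- Sign changes of a single coordinate among `1, …, m`. -/
def singleFlipSet (m : ℕ) : Set (GLQ m) :=
  {w | ∃ i : Fin (m+1), i ≠ 0 ∧ ∀ v k, w v k = if k = i then -(v k) else v k}

/-- The Weyl group for `osp(2m|2)`. -/
def WD (m : ℕ) : Subgroup (GLQ m) :=
  Subgroup.closure (permSet m ∪ doubleFlipSet m ∪ flip0Set m)

/-- The Weyl group for `osp(2m+1|2)`. -/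
def WB (m : ℕ) : Subgroup (GLQ m) :=
  Subgroup.closure (permSet m ∪ singleFlipSet m ∪ flip0Set m)

/-- The block equivalence: the smallest equivalence relation with
`μ ∼ μ+α` for odd roots `α = ±(δ±ε_i)` with `⟨μ+ρ, α⟩ = 0`, and
`μ ∼ w(μ+ρ)−ρ` for `w ∈ W`. -/
def blockRel (m : ℕ) (ρ : Fin (m+1) → ℚ) (W : Subgroup (GLQ m)) :
    (Fin (m+1) → ℚ) → (Fin (m+1) → ℚ) → Prop :=
  Relation.EqvGen (fun μ ν =>
    (∃ i : ℕ, 1 ≤ i ∧ i ≤ m ∧ ∃ s t : ℚ, (s = 1 ∨ s = -1) ∧ (t = 1 ∨ t = -1) ∧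
      form m (μ + ρ) (t • (eps m 0 + s • eps m i)) = 0 ∧
      ν = μ + t • (eps m 0 + s • eps m i)) ∨
    (∃ w ∈ W, ν = w (μ + ρ) - ρ))

def blockD (m : ℕ) : (Fin (m+1) → ℚ) → (Fin (m+1) → ℚ) → Prop :=
  blockRel m (rhoD m) (WD m)

def blockB (m : ℕ) : (Fin (m+1) → ℚ) → (Fin (m+1) → ℚ) → Prop :=
  blockRel m (rhoB m) (WB m)

/-- The set `𝒫_λ = 𝒫_{λ+} ∪ 𝒫_{λ−}` for `osp(2m|2)`. -/
noncomputable def PlamD (m : ℕ) (l : Fin (m+1) → ℚ) : Set (Fin (m+1) → ℚ) :=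
  {μ | PD m μ ∧
    (μ = l + eps m 0 ∨ μ = l - eps m 0 ∨
     (∃ i : ℕ, 1 ≤ i ∧ i ≤ m - 1 ∧ (μ = l + eps m i ∨ μ = l - eps m i)) ∨
     (0 ≤ l (m : Fin (m+1)) ∧ μ = l + eps m m) ∨
     (l (m : Fin (m+1)) ≤ 0 ∧ μ = l - eps m m) ∨
     (l (m : Fin (m+1)) < 0 ∧ μ = l + eps m m) ∨
     (0 < l (m : Fin (m+1)) ∧ μ = l - eps m m))}

/-- The set `𝒫_λ = 𝒫_{λ+} ∪ 𝒫_{λ−}` for `osp(2m+1|2)`. -/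
noncomputable def PlamB (m : ℕ) (l : Fin (m+1) → ℚ) : Set (Fin (m+1) → ℚ) :=
  {μ | PB m μ ∧
    ((∃ i : ℕ, i ≤ m ∧ (μ = l + eps m i ∨ μ = l - eps m i)) ∨
     (l (m : Fin (m+1)) ≠ 0 ∧ μ = l))}

/-- The weight `λ^{j,q}`. -/
noncomputable def lamJQ (m : ℕ) (l : Fin (m+1) → ℚ) (l0 j : ℕ) (q : ℤ) : Fin (m+1) → ℚ :=
  ((j : ℚ) - (q : ℚ)) • eps m 0 + (∑ i ∈ Finset.Icc 1 j, l (i : Fin (m+1)) • eps m i) +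
    (q : ℚ) • eps m (j + 1) +
    ∑ i ∈ Finset.Icc (j+1) l0, (l (i : Fin (m+1)) + 1) • eps m (i+1)

/-- The weight `λ^{j,q}_−`. -/
noncomputable def lamJQm (m : ℕ) (l : Fin (m+1) → ℚ) (l0 j : ℕ) (q : ℤ) : Fin (m+1) → ℚ :=
  ((j : ℚ) - (q : ℚ)) • eps m 0 + (∑ i ∈ Finset.Icc 1 j, l (i : Fin (m+1)) • eps m i) +
    (q : ℚ) • eps m (j + 1) +
    (∑ i ∈ Finset.Icc (j+1) (l0 - 1), (l (i : Fin (m+1)) + 1) • eps m (i+1)) -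
    (l (l0 : Fin (m+1)) + 1) • eps m (l0 + 1)

/-- `λ^δ` for `osp(2m|2)`: coordinate `0` becomes `2m−2−λ₀`. -/
noncomputable def deltaD (m : ℕ) (l : Fin (m+1) → ℚ) : Fin (m+1) → ℚ :=
  fun i => if i = 0 then 2*(m : ℚ) - 2 - l 0 else l i

/-- `λ^δ` for `osp(2m+1|2)`: coordinate `0` becomes `2m−1−λ₀`. -/
noncomputable def deltaB (m : ℕ) (l : Fin (m+1) → ℚ) : Fin (m+1) → ℚ :=
  fun i => if i = 0 then 2*(m : ℚ) - 1 - l 0 else l i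

/-- The group algebra `A = ℤ[Γ]` (with `Γ ⊆ ℚ^{1+m}` the weight lattice). -/
abbrev Am (m : ℕ) : Type := AddMonoidAlgebra ℤ (Fin (m+1) → ℚ)

noncomputable instance (m : ℕ) : IsDomain (Am m) := NoZeroDivisors.to_isDomain _

/-- The fraction field `K` of `A`. -/
abbrev Km (m : ℕ) : Type := FractionRing (Am m)

/-- The element `e^μ ∈ K`. -/
noncomputable def ee (m : ℕ) (μ : Fin (m+1) → ℚ) : Km m :=
  algebraMap (Am m) (Km m) (AddMonoidAlgebra.single μ 1)

/-- The Weyl group `W_o` of `o(2m+1)` (fixing coordinate 0). -/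
def WoB (m : ℕ) : Subgroup (GLQ m) := Subgroup.closure (permSet m ∪ singleFlipSet m)

/-- `ρ_o` for `o(2m+1)`. -/
noncomputable def rhooB (m : ℕ) : Fin (m+1) → ℚ :=
  fun i => if i = 0 then 0 else (m : ℚ) - (i : ℕ) + 1/2

/-- The Weyl character `chL(μ)` of the irreducible `o(2m+1)`-module with highest
weight `μ`, as an element of `K`. -/
noncomputable def chLB (m : ℕ) (μ : Fin (m+1) → ℚ) : Km m :=
  (∑ᶠ w ∈ (WoB m : Set (GLQ m)),
      ((LinearMap.det (LinearEquiv.toLinearMap w) : ℚ) : Km m) *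
        ee m (w (μ + rhooB m) - rhooB m)) /
  ((∏ p ∈ Finset.filter (fun p : ℕ × ℕ => p.1 < p.2) (Finset.Icc 1 m ×ˢ Finset.Icc 1 m),
      ((1 - ee m (-(eps m p.1 - eps m p.2))) * (1 - ee m (-(eps m p.1 + eps m p.2))))) *
    ∏ i ∈ Finset.Icc 1 m, (1 - ee m (-(eps m i))))

/-- The character `chM(ν)` of the generalized Verma module for `osp(2m+1|2)`. -/
noncomputable def chMB (m : ℕ) (ν : Fin (m+1) → ℚ) : Km m :=
  (((∏ i ∈ Finset.Icc 1 m,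
      ((1 + ee m (-(eps m 0 - eps m i))) * (1 + ee m (-(eps m 0 + eps m i))))) *
      (1 + ee m (-(eps m 0)))) /
    (1 - ee m (-((2 : ℚ) • eps m 0)))) *
  ee m (ν 0 • eps m 0) * chLB m (ν - ν 0 • eps m 0)

/-!
Since `λ` and `λ^δ` differ only in the `δ`-coordinate, `chM(λ) − chM(λ^δ)` is
`(e^{λ₀δ} − e^{(2m−1−λ₀)δ})` times the common factor
`∏_{Δ₁⁺}(1 + e^{−α}) / (1 − e^{−2δ}) · chL(λ − λ₀δ)`. On the other side, `W = W_o ⊔ σ₀ W_o`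
with `σ₀` the sign change of `δ`, which commutes with `W_o`, while `W_o` fixes `δ`; hence
`Σ_W det(w) e^{w(λ+ρ)} = (e^{cδ} − e^{−cδ}) Σ_{W_o} det(w) e^{w(λ−λ₀δ+ρ_o)}` with
`c = λ₀ + 1/2 − m`. Writing `e^{α/2} ± e^{−α/2} = e^{α/2}(1 ± e^{−α})` and using that the
half-sum of `Δ_o⁺` is `ρ_o`, both sides become the same multiple of this alternating sum.
-/

open scoped Pointwise

theorem Module.Basis.finite_stabilizer_of_mem {ι R M : Type*} [Finite ι] [Semiring R]
    [AddCommMonoid M] [Module R M] (b : Module.Basis ι R M) {C : Set M} (hC : C.Finite)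
    (hb : ∀ i, b i ∈ C) : (MulAction.stabilizer (M ≃ₗ[R] M) C : Set (M ≃ₗ[R] M)).Finite := by
  have hinj : Function.Injective fun (w : M ≃ₗ[R] M) i => w (b i) :=
    fun _ _ h => b.ext' fun i => congrFun h i
  refine ((Set.Finite.pi fun _ => hC).preimage hinj.injOn).subset fun w hw i _ => ?_
  rw [SetLike.mem_coe, MulAction.mem_stabilizer_iff] at hw
  exact hw ▸ Set.smul_mem_smul_set (hb i)

theorem Subgroup.coe_sup_closure_singleton_of_commute {G : Type*} [Group G] {H : Subgroup G}
    {z : G} (hz : z * z = 1) (hH : ∀ h ∈ H, Commute z h) :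
    ((H ⊔ closure {z} : Subgroup G) : Set G) = (H : Set G) ∪ (z * ·) '' H := by
  have hzinv : z⁻¹ = z := inv_eq_of_mul_eq_one_right hz
  refine Set.Subset.antisymm (fun x hx => ?_) ?_
  · rw [← closure_eq H, ← closure_union] at hx
    induction hx using closure_induction with
    | mem x hx =>
      rcases hx with hx | hx
      · exact Or.inl hx
      · exact Or.inr ⟨1, H.one_mem, (mul_one z).trans (Set.mem_singleton_iff.mp hx).symm⟩
    | one => exact Or.inl H.one_mem
    | mul x y _ _ hx hy =>
      rcases hx with hx | ⟨h, hh, rfl⟩ <;> rcases hy with hy | ⟨k, hk, rfl⟩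
      · exact Or.inl (H.mul_mem hx hy)
      · exact Or.inr ⟨x * k, H.mul_mem hx hk, ((hH x hx).symm.left_comm k).symm⟩
      · exact Or.inr ⟨h * y, H.mul_mem hh hy, (mul_assoc z h y).symm⟩
      · refine Or.inl ?_
        rw [mul_assoc, (hH h hh).symm.left_comm, ← mul_assoc, hz, one_mul]
        exact H.mul_mem hh hk
    | inv x _ hx =>
      rcases hx with hx | ⟨h, hh, rfl⟩
      · exact Or.inl (H.inv_mem hx)
      · exact Or.inr ⟨h⁻¹, H.inv_mem hh, by
        rw [mul_inv_rev, hzinv]; exact (hH _ (H.inv_mem hh)).eq⟩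
  · rintro x (hx | ⟨h, hh, rfl⟩)
    · exact mem_sup_left hx
    · exact mul_mem (mem_sup_right (subset_closure rfl)) (mem_sup_left hh)

namespace ee

variable {m : ℕ}

lemma add (a b : Fin (m+1) → ℚ) : ee m (a + b) = ee m a * ee m b := by
  rw [ee, ee, ee, ← map_mul, AddMonoidAlgebra.single_mul_single, one_mul]

lemma zero : ee m 0 = 1 := by
  rw [ee, ← AddMonoidAlgebra.one_def, map_one]

lemma neg (a : Fin (m+1) → ℚ) : ee m (-a) = (ee m a)⁻¹ :=
  eq_inv_of_mul_eq_one_left (by rw [← add, neg_add_cancel, zero])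

lemma sum {ι : Type*} (s : Finset ι) (f : ι → Fin (m+1) → ℚ) :
    ee m (∑ i ∈ s, f i) = ∏ i ∈ s, ee m (f i) := by
  classical
  induction s using Finset.induction_on with
  | empty => rw [sum_empty, prod_empty, zero]
  | insert a s ha ih => rw [sum_insert ha, prod_insert ha, add, ih]

end ee

lemma eps_zero_apply (m : ℕ) (k : Fin (m+1)) : eps m 0 k = if k = 0 then 1 else 0 := by
  rw [eps, Nat.cast_zero, Pi.single_apply]

lemma sum_Icc_smul_eps_apply (m : ℕ) (c : ℕ → ℚ) (k : Fin (m+1)) :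
    (∑ i ∈ Icc 1 m, c i • eps m i) k = if k = 0 then 0 else c k := by
  have hcast : ∀ i ∈ Icc 1 m, (k = (i : Fin (m+1))) ↔ (k : ℕ) = i := fun i hi => by
    rw [Fin.ext_iff, Fin.val_natCast, Nat.mod_eq_of_lt (by simp at hi; omega)]
  simp only [Finset.sum_apply, Pi.smul_apply, eps, Pi.single_apply, smul_eq_mul, mul_ite, mul_one,
    mul_zero]
  rw [sum_congr rfl fun i hi => if_congr (hcast i hi) rfl rfl, sum_ite_eq]
  simp only [mem_Icc, Fin.ext_iff, Fin.val_zero]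
  have := k.isLt
  split_ifs <;> first | rfl | omega

lemma sum_pairs_fst_add_half_sum_eps_eq_rhooB (m : ℕ) :
    (∑ p ∈ Finset.filter (fun p : ℕ × ℕ => p.1 < p.2) (Icc 1 m ×ˢ Icc 1 m), eps m p.1)
      + ∑ i ∈ Icc 1 m, (1/2 : ℚ) • eps m i = rhooB m := by
  have hpairs : ∑ p ∈ Finset.filter (fun p : ℕ × ℕ => p.1 < p.2) (Icc 1 m ×ˢ Icc 1 m),
      eps m p.1 = ∑ i ∈ Icc 1 m, ((m - i : ℕ) : ℚ) • eps m i := by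
    rw [sum_filter, sum_product]
    refine sum_congr rfl fun i _ => ?_
    rw [← sum_filter]
    dsimp only
    rw [sum_const, Nat.cast_smul_eq_nsmul, ← Nat.card_Ioc]
    congr
    ext j; simp only [mem_filter, mem_Icc, mem_Ioc]; omega
  rw [hpairs, ← sum_add_distrib]
  simp_rw [← add_smul]
  funext k
  rw [sum_Icc_smul_eps_apply, rhooB]
  split_ifs
  · rfl
  · rw [Nat.cast_sub (Nat.lt_succ_iff.mp k.isLt)]

section RootProducts

variable (m : ℕ)

noncomputable def oddRootProd : Km m :=
  (∏ i ∈ Icc 1 m, ((1 + ee m (-(eps m 0 - eps m i))) * (1 + ee m (-(eps m 0 + eps m i))))) *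
    (1 + ee m (-(eps m 0)))

noncomputable def orthRootProd : Km m :=
  (∏ p ∈ Finset.filter (fun p : ℕ × ℕ => p.1 < p.2) (Icc 1 m ×ˢ Icc 1 m),
      ((1 - ee m (-(eps m p.1 - eps m p.2))) * (1 - ee m (-(eps m p.1 + eps m p.2))))) *
    ∏ i ∈ Icc 1 m, (1 - ee m (-(eps m i)))

variable {m}

lemma ee_half_add_ee_neg_half (a : Fin (m+1) → ℚ) :
    ee m ((1/2 : ℚ) • a) + ee m (-((1/2 : ℚ) • a)) = ee m ((1/2 : ℚ) • a) * (1 + ee m (-a)) := by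
  rw [mul_add, mul_one, ← ee.add]
  congr 2
  module

lemma ee_half_sub_ee_neg_half (a : Fin (m+1) → ℚ) :
    ee m ((1/2 : ℚ) • a) - ee m (-((1/2 : ℚ) • a)) = ee m ((1/2 : ℚ) • a) * (1 - ee m (-a)) := by
  rw [mul_sub, mul_one, ← ee.add]
  congr 2
  module

lemma ee_sub_ee_neg (a : Fin (m+1) → ℚ) :
    ee m a - ee m (-a) = ee m a * (1 - ee m (-((2 : ℚ) • a))) := by
  rw [mul_sub, mul_one, ← ee.add]
  congr 2
  module

lemma prod_oddRoots_half_add :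
    (∏ i ∈ Icc 1 m,
        ((ee m ((1/2 : ℚ) • (eps m 0 - eps m i)) + ee m (-((1/2 : ℚ) • (eps m 0 - eps m i)))) *
         (ee m ((1/2 : ℚ) • (eps m 0 + eps m i)) + ee m (-((1/2 : ℚ) • (eps m 0 + eps m i)))))) *
      (ee m ((1/2 : ℚ) • eps m 0) + ee m (-((1/2 : ℚ) • eps m 0)))
    = ee m (((m : ℚ) + 1/2) • eps m 0) * oddRootProd m := by
  have hfactor : ∀ i : ℕ,
      (ee m ((1/2 : ℚ) • (eps m 0 - eps m i)) + ee m (-((1/2 : ℚ) • (eps m 0 - eps m i)))) *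
        (ee m ((1/2 : ℚ) • (eps m 0 + eps m i)) + ee m (-((1/2 : ℚ) • (eps m 0 + eps m i))))
      = ee m (eps m 0) *
        ((1 + ee m (-(eps m 0 - eps m i))) * (1 + ee m (-(eps m 0 + eps m i)))) := by
    intro i
    rw [ee_half_add_ee_neg_half, ee_half_add_ee_neg_half, mul_mul_mul_comm, ← ee.add]
    congr 3
    module
  have hsum : ∑ _i ∈ Icc 1 m, eps m 0 = (m : ℚ) • eps m 0 := by
    rw [sum_const, Nat.card_Icc, Nat.add_sub_cancel, Nat.cast_smul_eq_nsmul]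
  rw [prod_congr rfl fun i _ => hfactor i, prod_mul_distrib, ← ee.sum, hsum,
    ee_half_add_ee_neg_half, oddRootProd, add_smul, ee.add]
  ring

lemma prod_evenRoots_half_sub :
    (ee m (eps m 0) - ee m (-(eps m 0))) *
      (∏ p ∈ Finset.filter (fun p : ℕ × ℕ => p.1 < p.2) (Icc 1 m ×ˢ Icc 1 m),
        ((ee m ((1/2 : ℚ) • (eps m p.1 - eps m p.2)) -
            ee m (-((1/2 : ℚ) • (eps m p.1 - eps m p.2)))) *
         (ee m ((1/2 : ℚ) • (eps m p.1 + eps m p.2)) -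
            ee m (-((1/2 : ℚ) • (eps m p.1 + eps m p.2)))))) *
      ∏ i ∈ Icc 1 m, (ee m ((1/2 : ℚ) • eps m i) - ee m (-((1/2 : ℚ) • eps m i)))
    = ee m (eps m 0 + rhooB m) * ((1 - ee m (-((2 : ℚ) • eps m 0))) * orthRootProd m) := by
  have hfactor : ∀ p : ℕ × ℕ,
      (ee m ((1/2 : ℚ) • (eps m p.1 - eps m p.2)) -
          ee m (-((1/2 : ℚ) • (eps m p.1 - eps m p.2)))) *
        (ee m ((1/2 : ℚ) • (eps m p.1 + eps m p.2)) -
          ee m (-((1/2 : ℚ) • (eps m p.1 + eps m p.2))))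
      = ee m (eps m p.1) *
        ((1 - ee m (-(eps m p.1 - eps m p.2))) * (1 - ee m (-(eps m p.1 + eps m p.2)))) := by
    intro p
    rw [ee_half_sub_ee_neg_half, ee_half_sub_ee_neg_half, mul_mul_mul_comm, ← ee.add]
    congr 3
    module
  rw [prod_congr rfl fun p _ => hfactor p, prod_congr rfl fun i _ => ee_half_sub_ee_neg_half _,
    prod_mul_distrib (f := fun p : ℕ × ℕ => ee m (eps m p.1)),
    prod_mul_distrib (f := fun i : ℕ => ee m ((1/2 : ℚ) • eps m i)), ← ee.sum, ← ee.sum,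
    ee_sub_ee_neg, ← sum_pairs_fst_add_half_sum_eps_eq_rhooB, ee.add, ee.add, orthRootProd]
  ring

end RootProducts

section WeylGroup

variable {m : ℕ}

noncomputable def flipZero (m : ℕ) : GLQ m :=
  LinearEquiv.ofInvolutive (Matrix.toLin' (Matrix.diagonal fun k => if k = 0 then -1 else 1))
    fun v => by
      funext k
      rw [Matrix.toLin'_apply, Matrix.toLin'_apply, Matrix.mulVec_diagonal, Matrix.mulVec_diagonal]
      split_ifs <;> ring

lemma flipZero_apply (v : Fin (m+1) → ℚ) (k : Fin (m+1)) :
    flipZero m v k = if k = 0 then -v k else v k := by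
  change Matrix.toLin' _ v k = _
  rw [Matrix.toLin'_apply, Matrix.mulVec_diagonal]
  split_ifs <;> ring

lemma flip0Set_eq : flip0Set m = {flipZero m} := by
  ext w
  simp only [flip0Set, Set.mem_ofPred_eq, Set.mem_singleton_iff, ← flipZero_apply]
  exact ⟨fun h => LinearEquiv.ext fun v => funext (h v), fun h => h ▸ fun _ _ => rfl⟩

lemma det_flipZero : LinearMap.det (flipZero m).toLinearMap = -1 := by
  change LinearMap.det
    (Matrix.toLin' (Matrix.diagonal fun k : Fin (m+1) => if k = 0 then (-1 : ℚ) else 1)) = _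
  rw [LinearMap.det_toLin', Matrix.det_diagonal, prod_ite_eq' univ 0, if_pos (mem_univ _)]

lemma flipZero_mul_self : flipZero m * flipZero m = 1 :=
  LinearEquiv.ext fun v => funext fun k => by
    rw [LinearEquiv.mul_apply, flipZero_apply, flipZero_apply]
    split_ifs <;> simp

lemma flipZero_smul_eps_zero_add (c : ℚ) {y : Fin (m+1) → ℚ} (hy : y 0 = 0) :
    flipZero m (c • eps m 0 + y) = -c • eps m 0 + y := by
  funext k
  simp only [flipZero_apply, Pi.add_apply, Pi.smul_apply, eps_zero_apply, smul_eq_mul]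
  split_ifs with hk
  · subst hk; simp [hy]
  · simp

def IsSignedCoordPerm (w : GLQ m) : Prop :=
  ∃ σ : Equiv.Perm (Fin (m+1)), σ 0 = 0 ∧ ∃ s : Fin (m+1) → ℚ, (∀ k, s k = 1 ∨ s k = -1) ∧
    s 0 = 1 ∧ ∀ v k, w v k = s k * v (σ k)

lemma isSignedCoordPerm_of_mem_generators {w : GLQ m} (hw : w ∈ permSet m ∪ singleFlipSet m) :
    IsSignedCoordPerm w := by
  rcases hw with ⟨σ, hσ, hw⟩ | ⟨i, hi, hw⟩
  · exact ⟨σ, hσ, 1, fun _ => Or.inl rfl, rfl, fun v k => by simp [hw]⟩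
  · refine ⟨1, rfl, fun k => if k = i then -1 else 1,
      fun k => by dsimp only; split_ifs <;> simp, if_neg (Ne.symm hi), fun v k => ?_⟩
    rw [hw]
    split_ifs <;> simp [*]

lemma WoB_le_of_isSignedCoordPerm {H : Subgroup (GLQ m)}
    (hH : ∀ w, IsSignedCoordPerm w → w ∈ H) : WoB m ≤ H :=
  (Subgroup.closure_le H).mpr fun _ hw => hH _ (isSignedCoordPerm_of_mem_generators hw)

/-- `W_o` permutes these vectors, which makes it finite. -/
def signVectors (m : ℕ) : Set (Fin (m+1) → ℚ) := Set.univ.pi fun _ => {-1, 0, 1}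

namespace IsSignedCoordPerm

variable {w : GLQ m} (hw : IsSignedCoordPerm w)
include hw

lemma mem_stabilizer_signVectors : w ∈ MulAction.stabilizer (GLQ m) (signVectors m) := by
  obtain ⟨σ, -, s, hs, -, hws⟩ := hw
  have hmem : ∀ k (x : ℚ), s k * x ∈ ({-1, 0, 1} : Set ℚ) ↔ x ∈ ({-1, 0, 1} : Set ℚ) := by
    intro k x
    rcases hs k with h | h
    · rw [h, one_mul]
    · simp only [h, neg_one_mul, Set.mem_insert_iff, Set.mem_singleton_iff, neg_eq_iff_eq_neg,
        neg_zero, neg_neg]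
      tauto
  rw [MulAction.mem_stabilizer_set]
  intro v
  simp only [signVectors, Set.mem_univ_pi, LinearEquiv.smul_def, hws, hmem]
  exact σ.forall_congr_right (q := fun k => v k ∈ ({-1, 0, 1} : Set ℚ))

lemma apply_eps_zero : w (eps m 0) = eps m 0 := by
  obtain ⟨σ, hσ, s, -, hs0, hws⟩ := hw
  funext k
  simp only [hws, eps_zero_apply, σ.injective.eq_iff' hσ]
  split_ifs with hk
  · rw [hk, hs0, mul_one]
  · rw [mul_zero]

lemma commute_flipZero : Commute (flipZero m) w := by
  obtain ⟨σ, hσ, s, -, -, hws⟩ := hw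
  refine LinearEquiv.ext fun v => funext fun k => ?_
  simp only [LinearEquiv.mul_apply, flipZero_apply, hws, σ.injective.eq_iff' hσ]
  split_ifs <;> ring

end IsSignedCoordPerm

end WeylGroup

section WeylGroupStructure

variable {m : ℕ}

lemma finite_WoB : (WoB m : Set (GLQ m)).Finite := by
  refine ((Pi.basisFun ℚ (Fin (m+1))).finite_stabilizer_of_mem
    (Set.Finite.pi fun _ => Set.toFinite _) fun i k _ => ?_).subset
    (WoB_le_of_isSignedCoordPerm fun _ hw => hw.mem_stabilizer_signVectors)
  rw [Pi.basisFun_apply, Pi.single_apply]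
  split_ifs <;> simp

lemma apply_eps_zero_of_mem_WoB {w : GLQ m} (hw : w ∈ WoB m) : w (eps m 0) = eps m 0 :=
  WoB_le_of_isSignedCoordPerm (H := MulAction.stabilizer (GLQ m) (eps m 0))
    (fun _ hw => hw.apply_eps_zero) hw

lemma commute_flipZero_of_mem_WoB {w : GLQ m} (hw : w ∈ WoB m) : Commute (flipZero m) w :=
  (Subgroup.mem_centralizer_singleton_iff.mp
    (WoB_le_of_isSignedCoordPerm (H := Subgroup.centralizer {flipZero m})
      (fun _ hw => Subgroup.mem_centralizer_singleton_iff.mpr hw.commute_flipZero.eq.symm)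
      hw)).symm

lemma coe_WB : (WB m : Set (GLQ m)) = (WoB m : Set (GLQ m)) ∪ (flipZero m * ·) '' WoB m := by
  rw [WB, Subgroup.closure_union, flip0Set_eq, ← WoB]
  exact Subgroup.coe_sup_closure_singleton_of_commute flipZero_mul_self
    fun _ => commute_flipZero_of_mem_WoB

lemma disjoint_WoB_flipZero_mul :
    Disjoint (WoB m : Set (GLQ m)) ((flipZero m * ·) '' WoB m) := by
  refine Set.disjoint_left.mpr fun w hw ⟨u, hu, hwu⟩ => ?_
  have h := congrFun (apply_eps_zero_of_mem_WoB hw) 0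
  rw [← hwu, LinearEquiv.mul_apply, apply_eps_zero_of_mem_WoB hu, flipZero_apply, if_pos rfl,
    eps_zero_apply, if_pos rfl] at h
  norm_num at h

end WeylGroupStructure

section Characters

variable {m : ℕ}

noncomputable def weylNumerator (W : Subgroup (GLQ m)) (x : Fin (m+1) → ℚ) : Km m :=
  ∑ᶠ w ∈ (W : Set (GLQ m)), ((LinearMap.det (LinearEquiv.toLinearMap w) : ℚ) : Km m) * ee m (w x)

lemma weylNumerator_WB_smul_eps_zero_add (c : ℚ) {y : Fin (m+1) → ℚ} (hy : y 0 = 0) :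
    weylNumerator (WB m) (c • eps m 0 + y) =
      (ee m (c • eps m 0) - ee m (-c • eps m 0)) * weylNumerator (WoB m) y := by
  have hWo : ∀ w ∈ (WoB m : Set (GLQ m)),
      ((LinearMap.det w.toLinearMap : ℚ) : Km m) * ee m (w (c • eps m 0 + y)) =
        ee m (c • eps m 0) * (((LinearMap.det w.toLinearMap : ℚ) : Km m) * ee m (w y)) := by
    intro w hw
    rw [map_add, map_smul, apply_eps_zero_of_mem_WoB hw, ee.add]
    ring
  have hflip : ∀ w ∈ (WoB m : Set (GLQ m)),
      ((LinearMap.det (flipZero m * w).toLinearMap : ℚ) : Km m) *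
          ee m ((flipZero m * w) (c • eps m 0 + y)) =
        -ee m (-c • eps m 0) * (((LinearMap.det w.toLinearMap : ℚ) : Km m) * ee m (w y)) := by
    intro w hw
    have hdet : LinearMap.det (flipZero m * w).toLinearMap = -LinearMap.det w.toLinearMap := by
      rw [LinearEquiv.coe_toLinearMap_mul, map_mul, det_flipZero, neg_one_mul]
    rw [hdet, (commute_flipZero_of_mem_WoB hw).eq, LinearEquiv.mul_apply,
      flipZero_smul_eps_zero_add c hy, map_add, map_smul, apply_eps_zero_of_mem_WoB hw, ee.add]
    push_cast
    ring
  rw [weylNumerator, coe_WB, finsum_mem_union disjoint_WoB_flipZero_mul finite_WoB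
      (finite_WoB.image _), finsum_mem_image (mul_right_injective _).injOn,
    finsum_mem_congr rfl hWo, finsum_mem_congr rfl hflip, ← mul_finsum_mem, ← mul_finsum_mem,
    weylNumerator]
  ring

lemma chLB_eq_weylNumerator (μ : Fin (m+1) → ℚ) :
    chLB m μ = weylNumerator (WoB m) (μ + rhooB m) * ee m (-rhooB m) / orthRootProd m := by
  rw [chLB, weylNumerator, finsum_mem_mul, orthRootProd]
  simp only [sub_eq_add_neg, ee.add, mul_assoc]

lemma chMB_sub_chMB_deltaB (l : Fin (m+1) → ℚ) :
    chMB m l - chMB m (deltaB m l) =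
      oddRootProd m / (1 - ee m (-((2 : ℚ) • eps m 0))) *
        (ee m (l 0 • eps m 0) - ee m ((2 * m - 1 - l 0) • eps m 0)) *
        chLB m (l - l 0 • eps m 0) := by
  have hδ0 : deltaB m l 0 = 2 * m - 1 - l 0 := if_pos rfl
  have hδ : deltaB m l - deltaB m l 0 • eps m 0 = l - l 0 • eps m 0 := by
    funext k
    by_cases hk : k = 0 <;> simp [deltaB, eps_zero_apply, hk]
  rw [chMB, chMB, hδ, hδ0, oddRootProd]
  ring

end Characters

theorem lemma24_B_general (m : ℕ) (l : Fin (m+1) → ℚ) :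
    chMB m l - chMB m (deltaB m l) =
      (((∏ i ∈ Finset.Icc 1 m,
          ((ee m ((1/2 : ℚ) • (eps m 0 - eps m i)) +
              ee m (-((1/2 : ℚ) • (eps m 0 - eps m i)))) *
           (ee m ((1/2 : ℚ) • (eps m 0 + eps m i)) +
              ee m (-((1/2 : ℚ) • (eps m 0 + eps m i)))))) *
          (ee m ((1/2 : ℚ) • eps m 0) + ee m (-((1/2 : ℚ) • eps m 0)))) /
        ((ee m (eps m 0) - ee m (-(eps m 0))) *
          (∏ p ∈ Finset.filter (fun p : ℕ × ℕ => p.1 < p.2)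
              (Finset.Icc 1 m ×ˢ Finset.Icc 1 m),
            ((ee m ((1/2 : ℚ) • (eps m p.1 - eps m p.2)) -
                ee m (-((1/2 : ℚ) • (eps m p.1 - eps m p.2)))) *
             (ee m ((1/2 : ℚ) • (eps m p.1 + eps m p.2)) -
                ee m (-((1/2 : ℚ) • (eps m p.1 + eps m p.2)))))) *
          ∏ i ∈ Finset.Icc 1 m,
            (ee m ((1/2 : ℚ) • eps m i) - ee m (-((1/2 : ℚ) • eps m i))))) *
      ∑ᶠ w ∈ (WB m : Set (GLQ m)),
        ((LinearMap.det (LinearEquiv.toLinearMap w) : ℚ) : Km m) *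
          ee m (w (l + rhoB m)) := by
  set c : ℚ := l 0 + 1/2 - m
  set y := l - l 0 • eps m 0 + rhooB m
  have hsplit : l + rhoB m = c • eps m 0 + y := by
    funext k
    simp only [c, y, rhoB, rhooB, eps_zero_apply, Pi.add_apply, Pi.sub_apply, Pi.smul_apply,
      smul_eq_mul]
    split_ifs <;> ring
  have hy : y 0 = 0 := by simp [y, rhooB, eps_zero_apply]
  have hexp : (ee m (l 0 • eps m 0) - ee m ((2 * m - 1 - l 0) • eps m 0)) * ee m (-rhooB m) =
      ee m (((m : ℚ) + 1/2) • eps m 0) * ee m (-(eps m 0 + rhooB m)) *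
        (ee m (c • eps m 0) - ee m (-c • eps m 0)) := by
    rw [sub_mul, ← ee.add, ← ee.add, ← ee.add, mul_sub, ← ee.add, ← ee.add]
    congr 2 <;> module
  change _ = _ * weylNumerator (WB m) (l + rhoB m)
  rw [chMB_sub_chMB_deltaB, chLB_eq_weylNumerator, prod_oddRoots_half_add,
    prod_evenRoots_half_sub, hsplit, weylNumerator_WB_smul_eps_zero_add c hy,
    div_eq_mul_inv _ (_ * _), mul_inv, mul_inv, ← ee.neg]
  -- `1 - e^{-2δ}` and `orthRootProd m` enter both sides only through the same inverses,
  -- so whether they vanish never matters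
  linear_combination (oddRootProd m * weylNumerator (WoB m) y *
    (1 - ee m (-((2 : ℚ) • eps m 0)))⁻¹ * (orthRootProd m)⁻¹) * hexp

/-- Lemma 2.4 for `osp(2m+1|2)`: for `λ ∈ 𝒫` with `λ₀ ≥ m`,
`chM(λ) − chM(λ^δ) = (∏_{α∈Δ₁⁺}(e^{α/2}+e^{−α/2}) / ∏_{α∈Δ₀⁺}(e^{α/2}−e^{−α/2}))
· Σ_{w∈W} det(w) e^{w(λ+ρ)}`. -/
theorem lemma24_B (m : ℕ) (hm : 1 ≤ m) (l : Fin (m+1) → ℚ)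
    (hP : PB m l) (h0 : (m : ℚ) ≤ l 0) :
    chMB m l - chMB m (deltaB m l) =
      (((∏ i ∈ Finset.Icc 1 m,
          ((ee m ((1/2 : ℚ) • (eps m 0 - eps m i)) +
              ee m (-((1/2 : ℚ) • (eps m 0 - eps m i)))) *
           (ee m ((1/2 : ℚ) • (eps m 0 + eps m i)) +
              ee m (-((1/2 : ℚ) • (eps m 0 + eps m i)))))) *
          (ee m ((1/2 : ℚ) • eps m 0) + ee m (-((1/2 : ℚ) • eps m 0)))) /
        ((ee m (eps m 0) - ee m (-(eps m 0))) *
          (∏ p ∈ Finset.filter (fun p : ℕ × ℕ => p.1 < p.2)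
              (Finset.Icc 1 m ×ˢ Finset.Icc 1 m),
            ((ee m ((1/2 : ℚ) • (eps m p.1 - eps m p.2)) -
                ee m (-((1/2 : ℚ) • (eps m p.1 - eps m p.2)))) *
             (ee m ((1/2 : ℚ) • (eps m p.1 + eps m p.2)) -
                ee m (-((1/2 : ℚ) • (eps m p.1 + eps m p.2)))))) *
          ∏ i ∈ Finset.Icc 1 m,
            (ee m ((1/2 : ℚ) • eps m i) - ee m (-((1/2 : ℚ) • eps m i))))) *
      ∑ᶠ w ∈ (WB m : Set (GLQ m)),
        ((LinearMap.det (LinearEquiv.toLinearMap w) : ℚ) : Km m) *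
          ee m (w (l + rhoB m)) :=
  lemma24_B_general m l
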